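/- Let G be a fully residually free group and let g be an element of G with g ≠ 1. Then the centralizer of g in G is an abelian subgroup of G. -/

import Mathlib

/-- A group `G` is fully residually free if for every finite subset `S` of `G` with `1 ∉ S`
there is a homomorphism to the free group on two generators that is nonvanishing on `S`. -/
def FullyResiduallyFree (G : Type*) [Group G] : Prop :=
  ∀ S : Finset G, (1 : G) ∉ S →
    ∃ h : G →* FreeGroup (Fin 2), ∀ s ∈ S, h s ≠ 1

/-!
Free groups are commutative transitive. By Nielsen–Schreier the centralizer `C` of `a ≠ 1` in a
free group is free, and `a` is a nontrivial central element of `C`. A free group of rank at least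
two has trivial centre: a central element lies in the cyclic subgroup generated by each basis
element (basis elements are not proper powers, by counting exponents), and two distinct basis
elements generate cyclic subgroups meeting trivially. So `C` has rank at most one, hence is cyclic
and abelian.

If `x, y` centralize `g ≠ 1` but `⁅x, y⁆ ≠ 1`, full residual freeness gives a map to `F₂` killing
neither `g` nor `⁅x, y⁆`; the images of `x` and `y` commute with the nontrivial image of `g`, hence
with each other, a contradiction.
-/

open Subgroup
open scoped commutatorElement

namespace FreeGroup

variable {κ : Type*}

theorem eq_of_commute_of {i j : κ} (h : Commute (of i) (of j)) : i = j := by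
  classical
  by_contra hij
  -- send `of i` and `of j` to two non-commuting transpositions
  let f : κ → Equiv.Perm (Fin 3) := fun k => if k = i then Equiv.swap 0 1 else Equiv.swap 1 2
  have := congrArg (· 0) (h.map (lift f)).eq
  simp [f, Ne.symm hij, Equiv.swap_apply_def] at this

instance isCyclic_of_subsingleton [Subsingleton κ] : IsCyclic (FreeGroup κ) := by
  rcases isEmpty_or_nonempty κ with _ | ⟨⟨i⟩⟩
  · infer_instance
  · have : Unique κ := uniqueOfSubsingleton i
    infer_instance

def exponentSum [DecidableEq κ] (i : κ) : FreeGroup κ →* Multiplicative ℤ :=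
  lift (Pi.mulSingle i (Multiplicative.ofAdd 1))

@[simp]
theorem exponentSum_of_self [DecidableEq κ] (i : κ) : exponentSum i (of i) = .ofAdd 1 := by
  simp [exponentSum]

@[simp]
theorem exponentSum_of_of_ne [DecidableEq κ] {i j : κ} (h : j ≠ i) : exponentSum i (of j) = 1 := by
  simp [exponentSum, h]

end FreeGroup

namespace IsFreeGroup

variable {G : Type*} [Group G] [IsFreeGroup G]

theorem isCyclic_of_subsingleton_generators [Subsingleton (Generators G)] : IsCyclic G :=
  isCyclic_of_surjective (toFreeGroup G).symm (toFreeGroup G).symm.surjective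

theorem isCyclic_of_isMulCommutative [IsMulCommutative G] : IsCyclic G := by
  have : Subsingleton (Generators G) := ⟨fun i j => FreeGroup.eq_of_commute_of <| by
    simpa using Commute.map (IsMulCommutative.is_comm.comm
      ((toFreeGroup G).symm (.of i)) ((toFreeGroup G).symm (.of j))) (toFreeGroup G)⟩
  exact isCyclic_of_subsingleton_generators

theorem exists_mem_zpowers_of_commute {u v : G} (h : Commute u v) :
    ∃ s : G, u ∈ zpowers s ∧ v ∈ zpowers s := by
  have : IsMulCommutative (closure {u, v}) := isMulCommutative_closure <| by
    simp only [Set.mem_insert_iff, Set.mem_singleton_iff]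
    rintro _ (rfl | rfl) _ (rfl | rfl)
    exacts [rfl, h.eq, h.symm.eq, rfl]
  have := isCyclic_of_isMulCommutative (G := closure {u, v})
  obtain ⟨s, hs⟩ := IsCyclic.exists_generator (α := closure ({u, v} : Set G))
  have hs' : ∀ w ∈ closure ({u, v} : Set G), w ∈ zpowers (s : G) := fun w hw => by
    simpa [MonoidHom.map_zpowers] using mem_map_of_mem (Subgroup.closure _).subtype (hs ⟨w, hw⟩)
  exact ⟨s, hs' u (subset_closure (by simp)), hs' v (subset_closure (by simp))⟩

end IsFreeGroup

namespace FreeGroup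

variable {κ : Type*}

theorem mem_zpowers_of_of_eq_zpow {i : κ} {s : FreeGroup κ} {m : ℤ} (h : of i = s ^ m) :
    s ∈ zpowers (of i) := by
  classical
  have hm : m * (exponentSum i s).toAdd = 1 := by
    simpa using congrArg (fun w => (exponentSum i w).toAdd) h.symm
  have hm2 : m * m = 1 := Int.isUnit_mul_self (.of_mul_eq_one _ hm)
  exact mem_zpowers_iff.mpr ⟨m, by rw [h, ← zpow_mul, hm2, zpow_one]⟩

theorem mem_zpowers_of_of_commute {z : FreeGroup κ} {i : κ} (h : Commute z (of i)) :
    z ∈ zpowers (of i) := by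
  obtain ⟨s, hz, hi⟩ := IsFreeGroup.exists_mem_zpowers_of_commute h
  obtain ⟨m, hm⟩ := mem_zpowers_iff.mp hi
  exact zpowers_le.mpr (mem_zpowers_of_of_eq_zpow hm.symm) hz

theorem center_eq_bot [Nontrivial κ] : center (FreeGroup κ) = ⊥ := by
  classical
  obtain ⟨i, j, hij⟩ := exists_pair_ne κ
  refine eq_bot_iff.mpr fun z hz => ?_
  have hz' (t : κ) : z ∈ zpowers (of t) :=
    mem_zpowers_of_of_commute (mem_center_iff.mp hz (of t)).symm
  obtain ⟨k, rfl⟩ := mem_zpowers_iff.mp (hz' i)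
  obtain ⟨l, hl⟩ := mem_zpowers_iff.mp (hz' j)
  have hk : 0 = k := by simpa [hij.symm] using congrArg (fun w => (exponentSum i w).toAdd) hl
  simp [← hk]

end FreeGroup

namespace IsFreeGroup

variable {G : Type*} [Group G] [IsFreeGroup G]

theorem isCyclic_of_center_ne_bot (h : center G ≠ ⊥) : IsCyclic G := by
  rcases subsingleton_or_nontrivial (Generators G) with _ | _
  · exact isCyclic_of_subsingleton_generators
  · obtain ⟨z, hz⟩ := ne_bot_iff_exists_ne_one.mp h
    have hw : toFreeGroup G z ∈ center (FreeGroup (Generators G)) := (centerCongr _ z).2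
    rw [FreeGroup.center_eq_bot, mem_bot, MulEquiv.map_eq_one_iff] at hw
    exact absurd (Subtype.ext hw) hz

theorem commute_trans {a x y : G} (ha : a ≠ 1) (hxa : Commute x a) (hay : Commute a y) :
    Commute x y := by
  let C := centralizer ({a} : Set G)
  have hmem {w : G} (hw : Commute w a) : w ∈ C := mem_centralizer_singleton_iff.mpr hw.eq
  have ha_center : (⟨a, hmem (.refl a)⟩ : C) ∈ center C :=
    mem_center_iff.mpr fun c => Subtype.ext (mem_centralizer_singleton_iff.mp c.2)
  have := isCyclic_of_center_ne_bot <|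
    ne_bot_iff_exists_ne_one.mpr ⟨⟨_, ha_center⟩, by simpa using ha⟩
  exact congrArg Subtype.val
    (IsMulCommutative.is_comm.comm (⟨x, hmem hxa⟩ : C) ⟨y, hmem hay.symm⟩)

end IsFreeGroup

/-- In a fully residually free group, the centralizer of a nontrivial element is abelian. -/
theorem fully_residually_free_centralizer_abelian (G : Type*) [Group G]
    (hfrf : FullyResiduallyFree G) (g : G) (hg : g ≠ 1) :
    ∀ x ∈ Subgroup.centralizer {g}, ∀ y ∈ Subgroup.centralizer {g},
      x * y = y * x := by
  classical
  intro x hx y hy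
  by_contra hxy
  have hcomm : ⁅x, y⁆ ≠ 1 := commutatorElement_eq_one_iff_mul_comm.not.mpr hxy
  obtain ⟨φ, hφ⟩ := hfrf {g, ⁅x, y⁆} (by simp [hg.symm, hcomm.symm])
  have hφg : φ g ≠ 1 := hφ g (by simp)
  have hφx : Commute (φ x) (φ g) := Commute.map (mem_centralizer_singleton_iff.mp hx) φ
  have hφy : Commute (φ g) (φ y) := Commute.map (mem_centralizer_singleton_iff.mp hy).symm φ
  refine hφ ⁅x, y⁆ (by simp) ?_
  rw [map_commutatorElement, commutatorElement_eq_one_iff_commute]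
  exact IsFreeGroup.commute_trans hφg hφx hφy
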